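/- arXiv:1505.07344 — 8 statements merged into one kernel-verified Lean document; each statement's English description precedes it below -/
import Mathlib

section
/- Let H, K be complex Hilbert spaces, (X,μ) and (Y,ν) measure spaces, ρ: Y → X a measurable bijection with ν∘ρ⁻¹ = μ, T: H → K a bounded linear bijection with bounded inverse, and τ: Y → ℂ measurable with |τ(y)| = 1 for all y. Given weakly measurable, essentially norm-bounded Ψ, Φ: X → H, define Ψ̃(y) := τ(y)·T(Ψ(ρ(y))) and Φ̃(y) := τ(y)·T(Φ(ρ(y))). Then (Ψ,Φ) is a reproducing pair for H with respect to (X,μ) if and only if (Ψ̃,Φ̃) is a reproducing pair for K with respect to (Y,ν). -/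
open MeasureTheory
open scoped ComplexConjugate

noncomputable section

/-- `Ψ : X → H` is weakly measurable: `x ↦ ⟨f, Ψ x⟩` is a measurable function for
every `f ∈ H`.  Here `⟨·,·⟩` denotes the inner product in the paper's convention
(linear in the first argument), i.e. `⟨f, Ψ x⟩ = inner ℂ (Ψ x) f` in Mathlib's
convention. -/
def WeaklyMeasurable {X : Type*} [MeasurableSpace X] {H : Type*} [NormedAddCommGroup H]
    [InnerProductSpace ℂ H] (Ψ : X → H) : Prop :=
  ∀ f : H, Measurable fun x => (inner ℂ (Ψ x) f : ℂ)

/-- `Ψ : X → H` is essentially norm-bounded with respect to `μ`. -/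
def EssNormBounded {X : Type*} [MeasurableSpace X] (μ : Measure X) {H : Type*}
    [NormedAddCommGroup H] (Ψ : X → H) : Prop :=
  ∃ C : ℝ, ∀ᵐ x ∂μ, ‖Ψ x‖ ≤ C

/-- `S` is a resolution operator for the pair `(Ψ, Φ)`:
`⟨S f, g⟩ = ∫_X ⟨f, Ψ x⟩ · ⟨Φ x, g⟩ dμ(x)` for all `f, g ∈ H`, where `⟨·,·⟩` is the
paper's inner product (linear in the first argument), i.e. `⟨u, v⟩ = inner v u` in
Mathlib's convention. -/
def IsResolutionOperator {X : Type*} [MeasurableSpace X] (μ : Measure X) {H : Type*}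
    [NormedAddCommGroup H] [InnerProductSpace ℂ H] (Ψ Φ : X → H) (S : H →L[ℂ] H) : Prop :=
  ∀ f g : H, (inner ℂ g (S f) : ℂ) = ∫ x, (inner ℂ (Ψ x) f : ℂ) * (inner ℂ g (Φ x) : ℂ) ∂μ

/-- `(Ψ, Φ)` is a reproducing pair for `H` with respect to `(X, μ)`:  the resolution
operator is a bounded linear operator on `H` with bounded inverse. -/
def IsReproducingPair {X : Type*} [MeasurableSpace X] (μ : Measure X) {H : Type*}
    [NormedAddCommGroup H] [InnerProductSpace ℂ H] (Ψ Φ : X → H) : Prop :=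
  ∃ S : H ≃L[ℂ] H, IsResolutionOperator μ Ψ Φ (S : H →L[ℂ] H)

/-!
Each of the three operations changes the integrand `⟨f, Ψ̃ y⟩ ⟨Φ̃ y, g⟩` of the resolution
formula in a controlled way. The unimodular weight cancels against its conjugate, so the
integrand is unchanged. The change of variables `ρ` preserves the integral because `ν ∘ ρ⁻¹ = μ`;
weak measurability makes the integrand measurable, which is what the change of variables needs.
Transporting by `T` turns the integrand at `f, g` into the old one at `T* f, T* g`, so
`T S T*` is a resolution operator for the new pair whenever `S` is one for the old pair;
applying this to `T⁻¹` gives the converse.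
-/

namespace ContinuousLinearEquiv

variable {𝕜 E F : Type*} [RCLike 𝕜]
  [NormedAddCommGroup E] [InnerProductSpace 𝕜 E] [CompleteSpace E]
  [NormedAddCommGroup F] [InnerProductSpace 𝕜 F] [CompleteSpace F]

def adjoint (e : E ≃L[𝕜] F) : F ≃L[𝕜] E :=
  .equivOfInverse (e : E →L[𝕜] F).adjoint (e.symm : F →L[𝕜] E).adjoint
    (fun x => by
      rw [← ContinuousLinearMap.comp_apply, ← ContinuousLinearMap.adjoint_comp]
      simp [ContinuousLinearMap.adjoint_id])
    (fun x => by
      rw [← ContinuousLinearMap.comp_apply, ← ContinuousLinearMap.adjoint_comp]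
      simp [ContinuousLinearMap.adjoint_id])

end ContinuousLinearEquiv

section ReproducingPair

variable {X Y H K : Type*} [MeasurableSpace X] [MeasurableSpace Y]
  [NormedAddCommGroup H] [InnerProductSpace ℂ H] [NormedAddCommGroup K] [InnerProductSpace ℂ K]
  {μ : Measure X} {ν : Measure Y} {Ψ Φ : X → H}

theorem WeaklyMeasurable.measurable_inner_left (hΦ : WeaklyMeasurable Φ) (g : H) :
    Measurable fun x => (inner ℂ g (Φ x) : ℂ) := by
  simpa only [Function.comp_def, inner_conj_symm] using
    Complex.continuous_conj.measurable.comp (hΦ g)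

theorem isResolutionOperator_comp_iff {ρ : Y → X} (hρ : Measurable ρ) (hρμ : ν.map ρ = μ)
    (hΨ : WeaklyMeasurable Ψ) (hΦ : WeaklyMeasurable Φ) {S : H →L[ℂ] H} :
    IsResolutionOperator ν (Ψ ∘ ρ) (Φ ∘ ρ) S ↔ IsResolutionOperator μ Ψ Φ S := by
  refine forall₂_congr fun f g => ?_
  have hmeas : Measurable fun x => (inner ℂ (Ψ x) f : ℂ) * inner ℂ g (Φ x) :=
    (hΨ f).mul (hΦ.measurable_inner_left g)
  rw [← hρμ, integral_map hρ.aemeasurable hmeas.aestronglyMeasurable]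
  rfl

theorem isReproducingPair_comp_iff {ρ : Y → X} (hρ : Measurable ρ) (hρμ : ν.map ρ = μ)
    (hΨ : WeaklyMeasurable Ψ) (hΦ : WeaklyMeasurable Φ) :
    IsReproducingPair ν (Ψ ∘ ρ) (Φ ∘ ρ) ↔ IsReproducingPair μ Ψ Φ :=
  exists_congr fun _ => isResolutionOperator_comp_iff hρ hρμ hΨ hΦ

theorem isResolutionOperator_smul_iff {τ : X → ℂ} (hτ : ∀ᵐ x ∂μ, ‖τ x‖ = 1) {S : H →L[ℂ] H} :
    IsResolutionOperator μ (fun x => τ x • Ψ x) (fun x => τ x • Φ x) S ↔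
      IsResolutionOperator μ Ψ Φ S := by
  refine forall₂_congr fun f g => ?_
  suffices h : (∫ x, (inner ℂ (τ x • Ψ x) f : ℂ) * inner ℂ g (τ x • Φ x) ∂μ) =
      ∫ x, (inner ℂ (Ψ x) f : ℂ) * inner ℂ g (Φ x) ∂μ by rw [h]
  refine integral_congr_ae (hτ.mono fun x hx => ?_)
  have hunit : conj (τ x) * τ x = 1 := by rw [Complex.conj_mul', hx]; norm_num
  simp only [inner_smul_left, inner_smul_right]
  linear_combination (inner ℂ (Ψ x) f * inner ℂ g (Φ x)) * hunit

theorem isReproducingPair_smul_iff {τ : X → ℂ} (hτ : ∀ᵐ x ∂μ, ‖τ x‖ = 1) :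
    IsReproducingPair μ (fun x => τ x • Ψ x) (fun x => τ x • Φ x) ↔ IsReproducingPair μ Ψ Φ :=
  exists_congr fun _ => isResolutionOperator_smul_iff hτ

variable [CompleteSpace H] [CompleteSpace K]

theorem IsResolutionOperator.map {S : H →L[ℂ] H} (hS : IsResolutionOperator μ Ψ Φ S)
    (T : H →L[ℂ] K) :
    IsResolutionOperator μ (T ∘ Ψ) (T ∘ Φ) (T ∘L S ∘L T.adjoint) := by
  intro f g
  calc (inner ℂ g (T (S (T.adjoint f))) : ℂ)
      = inner ℂ (T.adjoint g) (S (T.adjoint f)) := (T.adjoint_inner_left _ _).symm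
    _ = _ := hS _ _
    _ = _ := by
      simp only [Function.comp_apply, ContinuousLinearMap.adjoint_inner_left,
        ContinuousLinearMap.adjoint_inner_right]

theorem IsReproducingPair.map (h : IsReproducingPair μ Ψ Φ) (T : H ≃L[ℂ] K) :
    IsReproducingPair μ (T ∘ Ψ) (T ∘ Φ) := by
  obtain ⟨S, hS⟩ := h
  exact ⟨T.adjoint.trans (S.trans T), hS.map (T : H →L[ℂ] K)⟩

theorem isReproducingPair_map_iff (T : H ≃L[ℂ] K) :
    IsReproducingPair μ (T ∘ Ψ) (T ∘ Φ) ↔ IsReproducingPair μ Ψ Φ := by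
  refine ⟨fun h => ?_, fun h => h.map T⟩
  simpa [Function.comp_def] using h.map T.symm

end ReproducingPair

theorem reproducingPair_equiv_general
    {H K : Type*} [NormedAddCommGroup H] [InnerProductSpace ℂ H] [CompleteSpace H]
    [NormedAddCommGroup K] [InnerProductSpace ℂ K] [CompleteSpace K]
    {X Y : Type*} [MeasurableSpace X] [MeasurableSpace Y]
    (μ : Measure X) (ν : Measure Y)
    (ρ : Y → X) (hρmeas : Measurable ρ)
    (hρμ : ν.map ρ = μ)
    (T : H ≃L[ℂ] K)
    (τ : Y → ℂ) (hτ : ∀ y, ‖τ y‖ = 1)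
    (Ψ Φ : X → H)
    (hΨw : WeaklyMeasurable Ψ) (hΦw : WeaklyMeasurable Φ) :
    IsReproducingPair μ Ψ Φ ↔
      IsReproducingPair ν (fun y => τ y • T (Ψ (ρ y))) (fun y => τ y • T (Φ (ρ y))) :=
  calc IsReproducingPair μ Ψ Φ
      ↔ IsReproducingPair ν (Ψ ∘ ρ) (Φ ∘ ρ) := (isReproducingPair_comp_iff hρmeas hρμ hΨw hΦw).symm
    _ ↔ IsReproducingPair ν (T ∘ Ψ ∘ ρ) (T ∘ Φ ∘ ρ) := (isReproducingPair_map_iff T).symm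
    _ ↔ _ := (isReproducingPair_smul_iff (.of_forall hτ)).symm

/-- (Lemma: equivalence of reproducing pairs under a measure-space
isomorphism, a bounded invertible operator and a unimodular weight.) -/
theorem reproducingPair_equiv
    {H K : Type*} [NormedAddCommGroup H] [InnerProductSpace ℂ H] [CompleteSpace H]
    [NormedAddCommGroup K] [InnerProductSpace ℂ K] [CompleteSpace K]
    {X Y : Type*} [MeasurableSpace X] [MeasurableSpace Y]
    (μ : Measure X) (ν : Measure Y)
    (ρ : Y → X) (hρmeas : Measurable ρ) (hρbij : Function.Bijective ρ)
    (hρμ : ν.map ρ = μ)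
    (T : H ≃L[ℂ] K)
    (τ : Y → ℂ) (hτmeas : Measurable τ) (hτ : ∀ y, ‖τ y‖ = 1)
    (Ψ Φ : X → H)
    (hΨw : WeaklyMeasurable Ψ) (hΦw : WeaklyMeasurable Φ)
    (hΨb : EssNormBounded μ Ψ) (hΦb : EssNormBounded μ Φ) :
    IsReproducingPair μ Ψ Φ ↔
      IsReproducingPair ν (fun y => τ y • T (Ψ (ρ y))) (fun y => τ y • T (Φ (ρ y))) :=
  reproducingPair_equiv_general μ ν ρ hρmeas hρμ T τ hτ Ψ Φ hΨw hΦw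
end
end

section
/- Let (Ψ,Φ) be a reproducing pair for a complex Hilbert space H over a measure space (X,μ), with resolution operator S := S_{Ψ,Φ}, and let F: X → ℂ lie in dom(D_Φ). Then there exists f ∈ H with F(x) = ⟨f,Ψ(x)⟩ for μ-a.e. x ∈ X if and only if F(x) = ∫_X ⟨S⁻¹Φ(y),Ψ(x)⟩ F(y) dμ(y) for μ-a.e. x ∈ X. -/
/-!
The resolution identity says exactly that `S f` is the weak integral of `⟨f, Ψ(·)⟩` against `Φ`,
and weak integrals commute with bounded operators (move the operator to the other side of the
inner product as its adjoint). Hence for every `F ∈ dom(D_Φ)` with `D_Φ F = g` the kernel integral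
`∫ ⟨S⁻¹Φ y, Ψ x⟩ F y dμ(y)` equals `⟨S⁻¹ g, Ψ x⟩`. If `F = ⟨f, Ψ(·)⟩` a.e. then `g = S f` and
this is `F x`; conversely the reproducing equation exhibits `F` as the analysis of `S⁻¹ g`.
-/

open MeasureTheory
open scoped ComplexConjugate

noncomputable section

/-- `g = ∫ F x • Φ x ∂μ` weakly, i.e. `F ∈ dom(D_Φ)` with `D_Φ F = g`. -/
def IsWeakIntegral {𝕜 X H : Type*} [RCLike 𝕜] [MeasurableSpace X] [NormedAddCommGroup H]
    [InnerProductSpace 𝕜 H] (μ : Measure X) (F : X → 𝕜) (Φ : X → H) (g : H) : Prop :=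
  ∀ h : H, inner 𝕜 h g = ∫ x, F x * inner 𝕜 h (Φ x) ∂μ

namespace IsWeakIntegral

variable {𝕜 X H K : Type*} [RCLike 𝕜] [MeasurableSpace X] {μ : Measure X}
  [NormedAddCommGroup H] [InnerProductSpace 𝕜 H] [NormedAddCommGroup K] [InnerProductSpace 𝕜 K]
  {F G : X → 𝕜} {Φ : X → H} {g : H}

theorem congr_ae (hg : IsWeakIntegral μ F Φ g) (hFG : F =ᵐ[μ] G) : IsWeakIntegral μ G Φ g :=
  fun h => (hg h).trans <| integral_congr_ae <| hFG.mono fun x hx => by simp only [hx]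

theorem map [CompleteSpace H] [CompleteSpace K] (hg : IsWeakIntegral μ F Φ g) (T : H →L[𝕜] K) :
    IsWeakIntegral μ F (fun x => T (Φ x)) (T g) := fun v => by
  simpa only [ContinuousLinearMap.adjoint_inner_left] using hg (T.adjoint v)

theorem inner_map_eq_integral [CompleteSpace H] [CompleteSpace K] (hg : IsWeakIntegral μ F Φ g)
    (T : H →L[𝕜] K) (v : K) : inner 𝕜 v (T g) = ∫ y, inner 𝕜 v (T (Φ y)) * F y ∂μ := by
  simp only [hg.map T v, mul_comm]

end IsWeakIntegral

theorem IsResolutionOperator.isWeakIntegral {X H : Type*} [MeasurableSpace X] {μ : Measure X}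
    [NormedAddCommGroup H] [InnerProductSpace ℂ H] {Ψ Φ : X → H} {S : H →L[ℂ] H}
    (hS : IsResolutionOperator μ Ψ Φ S) (f : H) :
    IsWeakIntegral μ (fun x => inner ℂ (Ψ x) f) Φ (S f) :=
  hS f

theorem mem_range_analysis_iff_reproducingKernel_general
    {H : Type*} [NormedAddCommGroup H] [InnerProductSpace ℂ H] [CompleteSpace H]
    {X : Type*} [MeasurableSpace X] (μ : Measure X)
    (Ψ Φ : X → H)
    (S : H ≃L[ℂ] H) (hS : IsResolutionOperator μ Ψ Φ (S : H →L[ℂ] H))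
    (F : X → ℂ)
    (hFdom : ∃ g : H, ∀ h : H, (inner ℂ h g : ℂ) = ∫ x, F x * (inner ℂ h (Φ x) : ℂ) ∂μ) :
    (∃ f : H, ∀ᵐ x ∂μ, F x = (inner ℂ (Ψ x) f : ℂ)) ↔
      (∀ᵐ x ∂μ, F x = ∫ y, (inner ℂ (Ψ x) (S.symm (Φ y)) : ℂ) * F y ∂μ) := by
  constructor
  · rintro ⟨f, hf⟩
    have hSf : IsWeakIntegral μ F Φ (S f) :=
      (hS.isWeakIntegral f).congr_ae (hf.mono fun _ => Eq.symm)
    filter_upwards [hf] with x hx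
    rw [hx, ← S.symm_apply_apply f]
    exact hSf.inner_map_eq_integral (S.symm : H →L[ℂ] H) (Ψ x)
  · intro hF
    obtain ⟨g, hg⟩ : ∃ g, IsWeakIntegral μ F Φ g := hFdom
    refine ⟨S.symm g, ?_⟩
    filter_upwards [hF] with x hx
    rw [hx]
    exact (hg.inner_map_eq_integral (S.symm : H →L[ℂ] H) (Ψ x)).symm

/-- (Reproducing kernel characterization of the range of the analysis
map.)  For a reproducing pair `(Ψ, Φ)` with resolution operator `S` and
`F ∈ dom(D_Φ)`: `F = ⟨f, Ψ(·)⟩` a.e. for some `f ∈ H` iff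
`F x = ∫ ⟨S⁻¹ Φ y, Ψ x⟩ F y dμ(y)` a.e. -/
theorem mem_range_analysis_iff_reproducingKernel
    {H : Type*} [NormedAddCommGroup H] [InnerProductSpace ℂ H] [CompleteSpace H]
    {X : Type*} [MeasurableSpace X] (μ : Measure X)
    (Ψ Φ : X → H)
    (hΨw : WeaklyMeasurable Ψ) (hΦw : WeaklyMeasurable Φ)
    (hΨb : EssNormBounded μ Ψ) (hΦb : EssNormBounded μ Φ)
    (S : H ≃L[ℂ] H) (hS : IsResolutionOperator μ Ψ Φ (S : H →L[ℂ] H))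
    (F : X → ℂ) (hFinfty : MemLp F ⊤ μ)
    (hFdom : ∃ g : H, ∀ h : H, (inner ℂ h g : ℂ) = ∫ x, F x * (inner ℂ h (Φ x) : ℂ) ∂μ) :
    (∃ f : H, ∀ᵐ x ∂μ, F x = (inner ℂ (Ψ x) f : ℂ)) ↔
      (∀ᵐ x ∂μ, F x = ∫ y, (inner ℂ (Ψ x) (S.symm (Φ y)) : ℂ) * F y ∂μ) :=
  mem_range_analysis_iff_reproducingKernel_general μ Ψ Φ S hS F hFdom
end
end

section
/- Let H be a complex Hilbert space, (X,μ) a measure space, and Ψ: X → H weakly measurable and essentially norm-bounded. Then Ψ is a continuous frame for H (i.e., there exist A,B > 0 with A‖f‖² ≤ ∫_X |⟨f,Ψ(x)⟩|² dμ(x) ≤ B‖f‖² for all f ∈ H) if and only if (Ψ,Ψ) is a reproducing pair, i.e., there exists a bounded linear operator S on H with bounded inverse such that ⟨Sf,g⟩ = ∫_X ⟨f,Ψ(x)⟩·⟨Ψ(x),g⟩ dμ(x) for all f,g ∈ H. -/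
/-!
If `S` is a resolution operator of `(Ψ, Ψ)`, then `⟨S f, f⟩ = ∫ |⟨f, Ψ x⟩|² dμ`, so `S` is a
positive operator and the frame bounds are the bounds of its quadratic form: the upper one is
`‖S‖`, and the lower one `‖S⁻¹‖⁻¹` comes from the Cauchy–Schwarz inequality for the semi-inner
product `⟨S ·, ·⟩`. Conversely, the upper frame bound makes the analysis operator
`T f = (x ↦ ⟨f, Ψ x⟩)` bounded into `L²(μ)`, `T* T` is a resolution operator of `(Ψ, Ψ)`, and the
lower frame bound says that its quadratic form is coercive, hence `T* T` is invertible.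
-/

open MeasureTheory
open scoped ComplexConjugate

noncomputable section

open scoped InnerProductSpace

namespace ContinuousLinearMap.IsPositive

variable {𝕜 E : Type*} [RCLike 𝕜] [NormedAddCommGroup E] [InnerProductSpace 𝕜 E]
  {T : E →L[𝕜] E}

theorem norm_inner_mul_norm_inner_le (hT : T.IsPositive) (x y : E) :
    ‖⟪T x, y⟫_𝕜‖ * ‖⟪T y, x⟫_𝕜‖ ≤ RCLike.re ⟪T x, x⟫_𝕜 * RCLike.re ⟪T y, y⟫_𝕜 := by
  -- Cauchy–Schwarz for the semi-inner product `(u, v) ↦ ⟪u, T v⟫`.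
  let c : PreInnerProductSpace.Core 𝕜 E :=
    { inner := fun u v => ⟪u, T v⟫_𝕜
      conj_inner_symm := fun u v => by
        simp only [inner_conj_symm, hT.inner_left_eq_inner_right]
      re_inner_nonneg := hT.re_inner_nonneg_right
      add_left := fun u v w => inner_add_left u v (T w)
      smul_left := fun u v r => inner_smul_left u (T v) r }
  have h : ‖⟪x, T y⟫_𝕜‖ * ‖⟪y, T x⟫_𝕜‖ ≤ RCLike.re ⟪x, T x⟫_𝕜 * RCLike.re ⟪y, T y⟫_𝕜 :=
    @InnerProductSpace.Core.inner_mul_inner_self_le 𝕜 E _ _ _ c x y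
  simpa only [hT.inner_left_eq_inner_right] using h

theorem norm_sq_le_norm_mul_re_inner (hT : T.IsPositive) {R : E →L[𝕜] E}
    (hR : Function.RightInverse R T) (f : E) :
    ‖f‖ ^ 2 ≤ ‖R‖ * RCLike.re ⟪T f, f⟫_𝕜 := by
  rcases eq_or_ne f 0 with rfl | hf
  · simp
  have hRf_left : ‖⟪T (R f), f⟫_𝕜‖ = ‖f‖ ^ 2 := by
    rw [hR f, inner_self_eq_norm_sq_to_K, norm_pow, RCLike.norm_ofReal, abs_norm]
  have hRf_right : ‖⟪T f, R f⟫_𝕜‖ = ‖f‖ ^ 2 := by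
    rw [hT.inner_left_eq_inner_right, ← hRf_left, ← inner_conj_symm, RCLike.norm_conj, hR f]
  have hRf_self : RCLike.re ⟪T (R f), R f⟫_𝕜 ≤ ‖R‖ * ‖f‖ ^ 2 :=
    calc RCLike.re ⟪T (R f), R f⟫_𝕜 ≤ ‖f‖ * ‖R f‖ := by
          rw [hR f]; exact re_inner_le_norm f (R f)
      _ ≤ ‖f‖ * (‖R‖ * ‖f‖) := by gcongr; exact R.le_opNorm f
      _ = ‖R‖ * ‖f‖ ^ 2 := by ring
  have key : ‖f‖ ^ 2 * ‖f‖ ^ 2 ≤ ‖f‖ ^ 2 * (‖R‖ * RCLike.re ⟪T f, f⟫_𝕜) :=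
    calc ‖f‖ ^ 2 * ‖f‖ ^ 2 ≤ RCLike.re ⟪T (R f), R f⟫_𝕜 * RCLike.re ⟪T f, f⟫_𝕜 := by
          simpa only [hRf_left, hRf_right] using hT.norm_inner_mul_norm_inner_le (R f) f
      _ ≤ ‖R‖ * ‖f‖ ^ 2 * RCLike.re ⟪T f, f⟫_𝕜 := by
          gcongr; exact hT.re_inner_nonneg_left f
      _ = ‖f‖ ^ 2 * (‖R‖ * RCLike.re ⟪T f, f⟫_𝕜) := by ring
  exact le_of_mul_le_mul_left key (by positivity)

end ContinuousLinearMap.IsPositive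

namespace MeasureTheory

variable {X : Type*} [MeasurableSpace X] {μ : Measure X}

theorem memLp_two_of_integral_norm_sq_pos {F : Type*} [NormedAddCommGroup F] {f : X → F}
    (hf : AEStronglyMeasurable f μ) (hpos : 0 < ∫ x, ‖f x‖ ^ 2 ∂μ) : MemLp f 2 μ :=
  (memLp_two_iff_integrable_sq_norm hf).2 (Integrable.of_integral_ne_zero hpos.ne')

theorem MemLp.norm_toLp_sq {F : Type*} [NormedAddCommGroup F] {f : X → F} (hf : MemLp f 2 μ) :
    ‖hf.toLp f‖ ^ 2 = ∫ x, ‖f x‖ ^ 2 ∂μ := by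
  rw [Lp.norm_toLp, hf.eLpNorm_eq_integral_rpow_norm two_ne_zero ENNReal.ofNat_ne_top,
    ENNReal.toReal_ofReal (by positivity), ← Real.rpow_natCast, ← Real.rpow_mul (by positivity)]
  norm_num

theorem MemLp.inner_toLp_toLp {𝕜 E : Type*} [RCLike 𝕜] [NormedAddCommGroup E]
    [InnerProductSpace 𝕜 E] {f g : X → E} (hf : MemLp f 2 μ) (hg : MemLp g 2 μ) :
    ⟪hf.toLp f, hg.toLp g⟫_𝕜 = ∫ x, ⟪f x, g x⟫_𝕜 ∂μ := by
  rw [L2.inner_def]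
  refine integral_congr_ae ?_
  filter_upwards [hf.coeFn_toLp, hg.coeFn_toLp] with x hfx hgx
  rw [hfx, hgx]

end MeasureTheory

section ContinuousFrame

variable {X H : Type*} [MeasurableSpace X] {μ : Measure X}
  [NormedAddCommGroup H] [InnerProductSpace ℂ H] {Ψ : X → H}

variable (μ Ψ) in
def IsContinuousFrame : Prop :=
  ∃ A B : ℝ, 0 < A ∧ 0 < B ∧ ∀ f : H,
    A * ‖f‖ ^ 2 ≤ ∫ x, ‖⟪Ψ x, f⟫_ℂ‖ ^ 2 ∂μ ∧ ∫ x, ‖⟪Ψ x, f⟫_ℂ‖ ^ 2 ∂μ ≤ B * ‖f‖ ^ 2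

theorem IsResolutionOperator.inner_apply_self {S : H →L[ℂ] H}
    (hS : IsResolutionOperator μ Ψ Ψ S) (f : H) :
    ⟪S f, f⟫_ℂ = ((∫ x, ‖⟪Ψ x, f⟫_ℂ‖ ^ 2 ∂μ : ℝ) : ℂ) := by
  rw [← inner_conj_symm, hS f f, ← integral_conj, ← integral_complex_ofReal]
  congr 1 with x
  rw [map_mul, inner_conj_symm, inner_conj_symm, ← inner_conj_symm f (Ψ x), Complex.conj_mul',
    Complex.ofReal_pow]

theorem IsResolutionOperator.isPositive {S : H →L[ℂ] H} (hS : IsResolutionOperator μ Ψ Ψ S) :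
    S.IsPositive := by
  refine ⟨fun f g => ?_, fun f => ?_⟩
  · rw [← inner_conj_symm, ContinuousLinearMap.coe_coe, hS f g, hS g f, ← integral_conj]
    congr 1 with x
    simp only [map_mul, inner_conj_symm, mul_comm]
  · rw [ContinuousLinearMap.reApplyInnerSelf_apply, hS.inner_apply_self, RCLike.re_to_complex,
      Complex.ofReal_re]
    exact integral_nonneg fun x => sq_nonneg _

theorem IsReproducingPair.isContinuousFrame (h : IsReproducingPair μ Ψ Ψ) :
    IsContinuousFrame μ Ψ := by
  obtain ⟨S, hS⟩ := h
  set T : H →L[ℂ] H := ↑S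
  have hT := hS.isPositive
  have hI : ∀ f, ∫ x, ‖⟪Ψ x, f⟫_ℂ‖ ^ 2 ∂μ = RCLike.re ⟪T f, f⟫_ℂ := fun f => by
    rw [hS.inner_apply_self, RCLike.re_to_complex, Complex.ofReal_re]
  refine ⟨(‖(S.symm : H →L[ℂ] H)‖ + 1)⁻¹, ‖T‖ + 1, by positivity, by positivity,
    fun f => ⟨?_, ?_⟩⟩
  · rw [inv_mul_le_iff₀ (by positivity), hI]
    calc ‖f‖ ^ 2 ≤ ‖(S.symm : H →L[ℂ] H)‖ * RCLike.re ⟪T f, f⟫_ℂ :=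
          hT.norm_sq_le_norm_mul_re_inner (R := S.symm) S.apply_symm_apply f
      _ ≤ (‖(S.symm : H →L[ℂ] H)‖ + 1) * RCLike.re ⟪T f, f⟫_ℂ := by
          gcongr
          · exact hT.re_inner_nonneg_left f
          · linarith
  · rw [hI]
    calc RCLike.re ⟪T f, f⟫_ℂ ≤ ‖T f‖ * ‖f‖ := re_inner_le_norm _ _
      _ ≤ ‖T‖ * ‖f‖ * ‖f‖ := by gcongr; exact T.le_opNorm f
      _ ≤ (‖T‖ + 1) * ‖f‖ ^ 2 := by nlinarith [norm_nonneg f]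

-- A non-integrable function has integral `0`, so the lower bound forces square integrability.
theorem memLp_inner_of_lower_frame_bound (hΨw : WeaklyMeasurable Ψ) {A : ℝ} (hA : 0 < A)
    (hlow : ∀ f, A * ‖f‖ ^ 2 ≤ ∫ x, ‖⟪Ψ x, f⟫_ℂ‖ ^ 2 ∂μ) (f : H) :
    MemLp (fun x => ⟪Ψ x, f⟫_ℂ) 2 μ := by
  rcases eq_or_ne f 0 with rfl | hf
  · simpa only [inner_zero_right] using MemLp.zero'
  · exact memLp_two_of_integral_norm_sq_pos (hΨw f).aestronglyMeasurable
      (lt_of_lt_of_le (by positivity) (hlow f))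

variable (μ Ψ) in
def analysisOperator (hΨ : ∀ f, MemLp (fun x => ⟪Ψ x, f⟫_ℂ) 2 μ) (B : ℝ)
    (hB : ∀ f, ∫ x, ‖⟪Ψ x, f⟫_ℂ‖ ^ 2 ∂μ ≤ B * ‖f‖ ^ 2) : H →L[ℂ] Lp ℂ 2 μ :=
  LinearMap.mkContinuous
    { toFun := fun f => (hΨ f).toLp _
      map_add' := fun f g => by
        simp_rw [inner_add_right]
        exact MemLp.toLp_add (hΨ f) (hΨ g)
      map_smul' := fun c f => by
        simp_rw [inner_smul_right]
        exact MemLp.toLp_const_smul c (hΨ f) }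
    √B fun f => by
      rw [← Real.sqrt_sq (norm_nonneg _), ← Real.sqrt_sq (norm_nonneg f),
        ← Real.sqrt_mul' _ (sq_nonneg _)]
      gcongr
      rw [LinearMap.coe_mk, AddHom.coe_mk, MemLp.norm_toLp_sq]
      exact hB f

theorem inner_analysisOperator (hΨ : ∀ f, MemLp (fun x => ⟪Ψ x, f⟫_ℂ) 2 μ) {B : ℝ}
    (hB : ∀ f, ∫ x, ‖⟪Ψ x, f⟫_ℂ‖ ^ 2 ∂μ ≤ B * ‖f‖ ^ 2) (g f : H) :
    ⟪analysisOperator μ Ψ hΨ B hB g, analysisOperator μ Ψ hΨ B hB f⟫_ℂ =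
      ∫ x, ⟪Ψ x, f⟫_ℂ * ⟪g, Ψ x⟫_ℂ ∂μ := by
  refine ((hΨ g).inner_toLp_toLp (hΨ f)).trans (integral_congr_ae (.of_forall fun x => ?_))
  simp only [RCLike.inner_apply, inner_conj_symm]

theorem isResolutionOperator_adjoint_comp_analysisOperator [CompleteSpace H]
    (hΨ : ∀ f, MemLp (fun x => ⟪Ψ x, f⟫_ℂ) 2 μ) {B : ℝ}
    (hB : ∀ f, ∫ x, ‖⟪Ψ x, f⟫_ℂ‖ ^ 2 ∂μ ≤ B * ‖f‖ ^ 2) :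
    IsResolutionOperator μ Ψ Ψ
      ((analysisOperator μ Ψ hΨ B hB).adjoint ∘L analysisOperator μ Ψ hΨ B hB) := fun f g => by
  rw [ContinuousLinearMap.comp_apply, ContinuousLinearMap.adjoint_inner_right,
    inner_analysisOperator]

theorem IsContinuousFrame.isReproducingPair [CompleteSpace H] (hΨw : WeaklyMeasurable Ψ)
    (hΨ : IsContinuousFrame μ Ψ) : IsReproducingPair μ Ψ Ψ := by
  obtain ⟨A, B, hA, -, hbounds⟩ := hΨ
  have hmem := memLp_inner_of_lower_frame_bound hΨw hA fun f => (hbounds f).1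
  set T := analysisOperator μ Ψ hmem B fun f => (hbounds f).2
  have hS : IsResolutionOperator μ Ψ Ψ (T.adjoint ∘L T) :=
    isResolutionOperator_adjoint_comp_analysisOperator _ _
  have hcoercive : ∀ f, ‖f‖ ^ 2 * A.toNNReal ≤ ‖⟪(T.adjoint ∘L T) f, f⟫_ℂ‖ := fun f => by
    rw [hS.inner_apply_self, Complex.norm_real, Real.norm_of_nonneg
      (integral_nonneg fun x => sq_nonneg _), Real.coe_toNNReal _ hA.le, mul_comm]
    exact (hbounds f).1
  have hunit : IsUnit (T.adjoint ∘L T) :=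
    ContinuousLinearMap.isUnit_of_forall_le_norm_inner_map _ (Real.toNNReal_pos.2 hA) hcoercive
  exact ⟨ContinuousLinearEquiv.unitsEquiv ℂ H hunit.unit, hS⟩

end ContinuousFrame

theorem continuousFrame_iff_reproducingPair_self_general
    {H : Type*} [NormedAddCommGroup H] [InnerProductSpace ℂ H] [CompleteSpace H]
    {X : Type*} [MeasurableSpace X] (μ : Measure X)
    (Ψ : X → H) (hΨw : WeaklyMeasurable Ψ) :
    (∃ A B : ℝ, 0 < A ∧ 0 < B ∧ ∀ f : H,
        A * ‖f‖ ^ 2 ≤ ∫ x, ‖(inner ℂ (Ψ x) f : ℂ)‖ ^ 2 ∂μ ∧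
        ∫ x, ‖(inner ℂ (Ψ x) f : ℂ)‖ ^ 2 ∂μ ≤ B * ‖f‖ ^ 2) ↔
      IsReproducingPair μ Ψ Ψ :=
  ⟨fun h => IsContinuousFrame.isReproducingPair hΨw h, IsReproducingPair.isContinuousFrame⟩

/-- A weakly measurable, essentially norm-bounded `Ψ : X → H` is a
continuous frame (there are `A, B > 0` with
`A‖f‖² ≤ ∫_X |⟨f, Ψ x⟩|² dμ(x) ≤ B‖f‖²` for all `f`) if and only if `(Ψ, Ψ)` is a
reproducing pair. -/
theorem continuousFrame_iff_reproducingPair_self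
    {H : Type*} [NormedAddCommGroup H] [InnerProductSpace ℂ H] [CompleteSpace H]
    {X : Type*} [MeasurableSpace X] (μ : Measure X)
    (Ψ : X → H) (hΨw : WeaklyMeasurable Ψ) (hΨb : EssNormBounded μ Ψ) :
    (∃ A B : ℝ, 0 < A ∧ 0 < B ∧ ∀ f : H,
        A * ‖f‖ ^ 2 ≤ ∫ x, ‖(inner ℂ (Ψ x) f : ℂ)‖ ^ 2 ∂μ ∧
        ∫ x, ‖(inner ℂ (Ψ x) f : ℂ)‖ ^ 2 ∂μ ≤ B * ‖f‖ ^ 2) ↔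
      IsReproducingPair μ Ψ Ψ :=
  continuousFrame_iff_reproducingPair_self_general μ Ψ hΨw
end
end

section
/- Let ψ ∈ L²(ℝ) be such that its Fourier transform ψ̂ is continuous and satisfies: (i) there exists ξ₀ ≠ 0 with inf_{a∈[1,2]} |ψ̂(a ξ₀)| > 0 and inf_{a∈[1,2]} |ψ̂(−a ξ₀)| > 0; (ii) there exists C > 0 with |ψ̂(ξ)|² ≤ C|ξ|/(1+|ξ|)² for all ξ ∈ ℝ. Then there exist constants 0 < A ≤ B < ∞ such that A ≤ Σ_{j∈ℤ} |ψ̂(2^j ξ)|² ≤ B for a.e. ξ ∈ ℝ. -/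
/-!
Pick `n` with `s = 2 ^ n |ξ| ∈ [1, 2]`. The term with index `j` is at most `C x / (1 + x) ^ 2`
with `x = 2 ^ (j - n) s`, which is `O(2 ^ (-|j - n|))`; this shifted geometric series sums to a
bound `6 C` independent of `ξ`. For the lower bound, some dyadic dilate of `ξ` lands in
`±[1, 2] ξ₀`, where `|ψ̂| ≥ c`.
-/

open MeasureTheory

theorem hasSum_half_pow_natAbs : HasSum (fun j : ℤ => (1 / 2 : ℝ) ^ j.natAbs) 3 := by
  have hnonneg : HasSum (fun n : ℕ => (1 / 2 : ℝ) ^ (n : ℤ).natAbs) 2 := by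
    simpa only [Int.natAbs_natCast] using hasSum_geometric_two
  have hneg : HasSum (fun n : ℕ => (1 / 2 : ℝ) ^ (-(n + 1 : ℤ)).natAbs) 1 := by
    have h := hasSum_geometric_two.mul_left (1 / 2)
    rw [show (1 / 2 : ℝ) * 2 = 1 by norm_num] at h
    refine h.congr_fun fun n => ?_
    rw [← pow_succ']
    congr 1
  have h :=
    HasSum.of_nat_of_neg_add_one (f := fun j : ℤ => (1 / 2 : ℝ) ^ j.natAbs) hnonneg hneg
  rwa [show (2 : ℝ) + 1 = 3 by norm_num] at h

theorem exists_two_zpow_mul_mem_Icc {t : ℝ} (ht : 0 < t) :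
    ∃ n : ℤ, 2 ^ n * t ∈ Set.Icc (1 : ℝ) 2 := by
  obtain ⟨n, hn₁, hn₂⟩ := exists_mem_Ico_zpow ht one_lt_two
  have h2n : (0 : ℝ) < 2 ^ n := by positivity
  refine ⟨-n, ?_, ?_⟩
  · rw [zpow_neg, inv_mul_eq_div, le_div_iff₀ h2n, one_mul]; exact hn₁
  · rw [zpow_add₀ two_ne_zero, zpow_one] at hn₂
    rw [zpow_neg, inv_mul_eq_div, div_le_iff₀ h2n, mul_comm]; exact hn₂.le

/-- With `x = 2 ^ k * s`, use `x / (1 + x) ^ 2 ≤ 1 / x` for `k ≥ 0` and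
`x / (1 + x) ^ 2 ≤ x` for `k ≤ 0`. -/
theorem two_zpow_mul_div_one_add_sq_le {s : ℝ} (hs : s ∈ Set.Icc (1 : ℝ) 2) (k : ℤ) :
    2 ^ k * s / (1 + 2 ^ k * s) ^ 2 ≤ 2 * (1 / 2 : ℝ) ^ k.natAbs := by
  obtain ⟨hs₁, hs₂⟩ := hs
  have hx : 0 < 2 ^ k * s := by positivity
  obtain ⟨m, rfl | rfl⟩ := Int.eq_nat_or_neg k
  · have h2m : (0 : ℝ) < 2 ^ m := by positivity
    calc 2 ^ (m : ℤ) * s / (1 + 2 ^ (m : ℤ) * s) ^ 2 ≤ (2 ^ (m : ℤ) * s)⁻¹ := by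
          rw [div_le_iff₀ (by positivity), inv_mul_eq_div, le_div_iff₀ hx]; nlinarith
      _ ≤ (2 ^ m)⁻¹ := by gcongr; rw [zpow_natCast]; nlinarith
      _ ≤ 2 * (1 / 2 : ℝ) ^ (m : ℤ).natAbs := by
          rw [Int.natAbs_natCast, one_div, inv_pow]; linarith [inv_pos.2 h2m]
  · calc 2 ^ (-m : ℤ) * s / (1 + 2 ^ (-m : ℤ) * s) ^ 2 ≤ 2 ^ (-m : ℤ) * s :=
          div_le_self hx.le (by nlinarith)
      _ ≤ 2 ^ (-m : ℤ) * 2 := by gcongr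
      _ = 2 * (1 / 2 : ℝ) ^ (-m : ℤ).natAbs := by
          rw [Int.natAbs_neg, Int.natAbs_natCast, zpow_neg, zpow_natCast, one_div, inv_pow,
            mul_comm]

theorem summable_and_tsum_two_zpow_mul_le {g : ℝ → ℝ} {C : ℝ} (hg : ∀ x, 0 ≤ g x)
    (hC : 0 ≤ C) (hdecay : ∀ x, g x ≤ C * |x| / (1 + |x|) ^ 2) {ξ : ℝ} (hξ : ξ ≠ 0) :
    Summable (fun j : ℤ => g (2 ^ j * ξ)) ∧ ∑' j : ℤ, g (2 ^ j * ξ) ≤ 6 * C := by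
  obtain ⟨n, hs⟩ := exists_two_zpow_mul_mem_Icc (abs_pos.2 hξ)
  set s := 2 ^ n * |ξ|
  have hmajorant : HasSum (fun j : ℤ => 2 * C * (1 / 2 : ℝ) ^ (j - n).natAbs) (6 * C) := by
    have h := (Equiv.subRight n).hasSum_iff.2 (hasSum_half_pow_natAbs.mul_left (2 * C))
    rwa [show 2 * C * 3 = 6 * C by ring] at h
  have hbound (j : ℤ) : g (2 ^ j * ξ) ≤ 2 * C * (1 / 2 : ℝ) ^ (j - n).natAbs := by
    have habs : |2 ^ j * ξ| = 2 ^ (j - n) * s := by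
      rw [abs_mul, abs_of_pos (zpow_pos two_pos j), ← mul_assoc, ← zpow_add₀ two_ne_zero,
        sub_add_cancel]
    calc g (2 ^ j * ξ) ≤ C * (2 ^ (j - n) * s / (1 + 2 ^ (j - n) * s) ^ 2) := by
          rw [← habs, ← mul_div_assoc]; exact hdecay _
      _ ≤ C * (2 * (1 / 2 : ℝ) ^ (j - n).natAbs) := by
          gcongr; exact two_zpow_mul_div_one_add_sq_le hs _
      _ = 2 * C * (1 / 2 : ℝ) ^ (j - n).natAbs := by ring
  have hsum : Summable (fun j : ℤ => g (2 ^ j * ξ)) :=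
    hmajorant.summable.of_nonneg_of_le (fun j => hg _) hbound
  exact ⟨hsum, hasSum_le hbound hsum.hasSum hmajorant⟩

theorem exists_le_apply_two_zpow_mul {g : ℝ → ℝ} {ξ₀ c : ℝ} (hξ₀ : ξ₀ ≠ 0)
    (hg : ∀ a ∈ Set.Icc (1 : ℝ) 2, c ≤ g (a * ξ₀) ∧ c ≤ g (-(a * ξ₀)))
    {ξ : ℝ} (hξ : ξ ≠ 0) :
    ∃ j : ℤ, c ≤ g (2 ^ j * ξ) := by
  obtain ⟨n, hn⟩ := exists_two_zpow_mul_mem_Icc (abs_pos.2 (div_ne_zero hξ hξ₀))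
  have hdilate : 2 ^ n * ξ = 2 ^ n * (ξ / ξ₀) * ξ₀ := by field_simp
  have hmem : |2 ^ n * (ξ / ξ₀)| ∈ Set.Icc (1 : ℝ) 2 := by
    rwa [abs_mul, abs_of_pos (zpow_pos two_pos n)]
  refine ⟨n, ?_⟩
  rcases abs_choice (2 ^ n * (ξ / ξ₀)) with h | h
  · rw [hdilate, ← h]; exact (hg _ hmem).1
  · rw [hdilate, ← neg_neg (2 ^ n * (ξ / ξ₀)), ← h, neg_mul]; exact (hg _ hmem).2

theorem dyadic_calderon_sum_bounded_general
    (ψhat : ℝ → ℂ)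
    (ξ₀ : ℝ) (hξ₀ : ξ₀ ≠ 0)
    (c : ℝ) (hc : 0 < c)
    (hinf : ∀ a ∈ Set.Icc (1 : ℝ) 2,
      c ≤ ‖ψhat (a * ξ₀)‖ ∧ c ≤ ‖ψhat (-(a * ξ₀))‖)
    (C : ℝ) (hC : 0 < C)
    (hdecay : ∀ ξ : ℝ, ‖ψhat ξ‖ ^ 2 ≤ C * |ξ| / (1 + |ξ|) ^ 2) :
    ∃ A B : ℝ, 0 < A ∧ 0 < B ∧
      ∀ᵐ ξ ∂(volume : Measure ℝ),
        A ≤ ∑' j : ℤ, ‖ψhat ((2 : ℝ) ^ j * ξ)‖ ^ 2 ∧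
        (∑' j : ℤ, ‖ψhat ((2 : ℝ) ^ j * ξ)‖ ^ 2) ≤ B := by
  refine ⟨c ^ 2, 6 * C, by positivity, by positivity, ?_⟩
  filter_upwards [volume.ae_ne 0] with ξ hξ
  obtain ⟨hsum, hle⟩ :=
    summable_and_tsum_two_zpow_mul_le (fun x => sq_nonneg ‖ψhat x‖) hC.le hdecay hξ
  obtain ⟨j, hj⟩ := exists_le_apply_two_zpow_mul (g := fun x => ‖ψhat x‖) hξ₀ hinf hξ
  exact ⟨(pow_le_pow_left₀ hc.le hj 2).trans (hsum.le_tsum j fun _ _ => sq_nonneg _), hle⟩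

/-- If `ψ̂` is continuous, does not vanish on `±[ξ₀, 2ξ₀]` for some
`ξ₀ ≠ 0`, and satisfies the decay estimate `|ψ̂(ξ)|² ≤ C|ξ|/(1+|ξ|)²`, then the
dyadic Calderón sum `Σ_{j∈ℤ} |ψ̂(2^j ξ)|²` is essentially bounded above and below. -/
theorem dyadic_calderon_sum_bounded
    (ψhat : ℝ → ℂ) (hψL2 : MemLp ψhat 2 (volume : Measure ℝ))
    (hcont : Continuous ψhat)
    (ξ₀ : ℝ) (hξ₀ : ξ₀ ≠ 0)
    (c : ℝ) (hc : 0 < c)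
    (hinf : ∀ a ∈ Set.Icc (1 : ℝ) 2,
      c ≤ ‖ψhat (a * ξ₀)‖ ∧ c ≤ ‖ψhat (-(a * ξ₀))‖)
    (C : ℝ) (hC : 0 < C)
    (hdecay : ∀ ξ : ℝ, ‖ψhat ξ‖ ^ 2 ≤ C * |ξ| / (1 + |ξ|) ^ 2) :
    ∃ A B : ℝ, 0 < A ∧ 0 < B ∧
      ∀ᵐ ξ ∂(volume : Measure ℝ),
        A ≤ ∑' j : ℤ, ‖ψhat ((2 : ℝ) ^ j * ξ)‖ ^ 2 ∧
        (∑' j : ℤ, ‖ψhat ((2 : ℝ) ^ j * ξ)‖ ^ 2) ≤ B :=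
  dyadic_calderon_sum_bounded_general ψhat ξ₀ hξ₀ c hc hinf C hC hdecay
end

section
/- Let F: ℝ → ℂ be measurable with ∫_{−1}^{1} |F(z)|·(1/(1+z) + 1/(1−z)) dz < ∞ and F(z)/(1+z), F(z)/(1−z) locally integrable on ℝ∖{−1} and ℝ∖{1} respectively, and suppose ∫_ℝ |F((ξ−ω)/(1+|ω|))|·(1+|ω|)^{−1} dω < ∞ for a.e. ξ. Then for a.e. ξ ∈ ℝ: ∫_ℝ F((ξ−ω)/(1+|ω|))·(1+|ω|)^{−1} dω = ∫_{−1}^{ξ} F(z)/(1+z) dz + ∫_{ξ}^{1} F(z)/(1−z) dz, where the one-dimensional integrals on the right are oriented. In particular, with F = conj(ψ̂)·φ̂ for ψ, φ ∈ L²(ℝ), the symbol m(ξ) of the system M_ω T_x D_{(1+|ω|)^{−1}}ψ, M_ω T_x D_{(1+|ω|)^{−1}}φ with measure dx dω equals ∫_{−1}^{ξ} conj(ψ̂(z))φ̂(z)/(1+z) dz + ∫_{ξ}^{1} conj(ψ̂(z))φ̂(z)/(1−z) dz. -/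
/-!
Split the `ω`-integral at `0`. For `ω > 0` the substitution `u = (1 + ω)⁻¹` maps `(0, ∞)` onto
`(0, 1)` and turns the integrand into `(1 + ξ) g((1 + ξ) u - 1)` with `g z = F z / (1 + z)`, so the
linear substitution `z = (1 + ξ) u - 1` yields `∫_{-1}^ξ g`; the orientation of the interval
integral absorbs the sign of `1 + ξ`. The half `ω < 0` is the mirror image under `ω ↦ -ω`,
`z ↦ -z`.
-/

open MeasureTheory Set
open scoped ENNReal

variable {E : Type*} [NormedAddCommGroup E] [NormedSpace ℝ E]

theorem image_inv_one_add_Ioi_zero : (fun ω : ℝ => (1 + ω)⁻¹) '' Ioi 0 = Ioo 0 1 := by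
  rw [show (fun ω : ℝ => (1 + ω)⁻¹) = Inv.inv ∘ (1 + ·) from rfl, image_comp,
    image_const_add_Ioi, add_zero, image_inv_eq_inv, inv_Ioi₀ one_pos, inv_one]

theorem integral_Ioi_comp_inv_one_add (g : ℝ → E) :
    ∫ ω in Ioi (0 : ℝ), g (1 + ω)⁻¹ = ∫ u in (0 : ℝ)..1, (u ^ 2)⁻¹ • g u := by
  have hderiv : ∀ ω ∈ Ioi (0 : ℝ),
      HasDerivWithinAt (fun ω : ℝ => (1 + ω)⁻¹) (-1 / (1 + ω) ^ 2) (Ioi 0) ω := fun ω hω => by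
    have h : 1 + ω ≠ 0 := by have : (0 : ℝ) < ω := hω; positivity
    exact (((hasDerivAt_id' ω).const_add 1).inv h).hasDerivWithinAt
  have hinj : InjOn (fun ω : ℝ => (1 + ω)⁻¹) (Ioi 0) := fun a _ b _ h => by simpa using h
  rw [intervalIntegral.integral_of_le zero_le_one, integral_Ioc_eq_integral_Ioo,
    ← image_inv_one_add_Ioi_zero,
    integral_image_eq_integral_abs_deriv_smul measurableSet_Ioi hderiv hinj]
  refine setIntegral_congr_fun measurableSet_Ioi fun ω hω => ?_
  have h : 0 < 1 + ω := by have : (0 : ℝ) < ω := hω; positivity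
  rw [smul_smul, abs_div, abs_neg, abs_one, abs_of_pos (by positivity), inv_pow, inv_inv,
    one_div_mul_cancel (by positivity), one_smul]

theorem integral_Ioi_comp_sub_div_one_add {ξ : ℝ} (hξ : 1 + ξ ≠ 0) (F : ℝ → E) :
    ∫ ω in Ioi (0 : ℝ), (1 + ω)⁻¹ • F ((ξ - ω) / (1 + ω))
      = ∫ z in (-1 : ℝ)..ξ, (1 + z)⁻¹ • F z := by
  set c := 1 + ξ
  have hmoebius : ∀ ω ∈ Ioi (0 : ℝ), (ξ - ω) / (1 + ω) = c * (1 + ω)⁻¹ - 1 := fun ω hω => by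
    have : 1 + ω ≠ 0 := by have : (0 : ℝ) < ω := hω; positivity
    field_simp
    ring
  calc ∫ ω in Ioi (0 : ℝ), (1 + ω)⁻¹ • F ((ξ - ω) / (1 + ω))
      = ∫ ω in Ioi (0 : ℝ), (fun u => u • F (c * u - 1)) (1 + ω)⁻¹ :=
        setIntegral_congr_fun measurableSet_Ioi fun ω hω => by rw [hmoebius ω hω]
    _ = ∫ u in (0 : ℝ)..1, c • ((1 + (c * u - 1))⁻¹ • F (c * u - 1)) := by
        rw [integral_Ioi_comp_inv_one_add (fun u => u • F (c * u - 1))]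
        refine intervalIntegral.integral_congr_ae (ae_of_all _ fun u hu => ?_)
        rw [uIoc_of_le zero_le_one] at hu
        have : u ≠ 0 := hu.1.ne'
        rw [smul_smul, smul_smul, add_sub_cancel]
        congr 1
        field_simp
    _ = ∫ z in (-1 : ℝ)..ξ, (1 + z)⁻¹ • F z := by
        rw [intervalIntegral.integral_smul,
          intervalIntegral.smul_integral_comp_mul_sub (fun z => (1 + z)⁻¹ • F z)]
        simp [c]

theorem integral_Iio_comp_sub_div_one_sub {ξ : ℝ} (hξ : 1 - ξ ≠ 0) (F : ℝ → E) :
    ∫ ω in Iio (0 : ℝ), (1 - ω)⁻¹ • F ((ξ - ω) / (1 - ω))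
      = ∫ z in ξ..1, (1 - z)⁻¹ • F z := by
  calc ∫ ω in Iio (0 : ℝ), (1 - ω)⁻¹ • F ((ξ - ω) / (1 - ω))
      = ∫ ω in Ioi (0 : ℝ), (1 + ω)⁻¹ • F (-((-ξ - ω) / (1 + ω))) := by
        have h := integral_comp_neg_Ioi 0 fun ω => (1 - ω)⁻¹ • F ((ξ - ω) / (1 - ω))
        rw [neg_zero, integral_Iic_eq_integral_Iio] at h
        rw [← h]
        refine setIntegral_congr_fun measurableSet_Ioi fun ω _ => ?_
        rw [sub_neg_eq_add, sub_neg_eq_add, ← neg_div, neg_sub, sub_neg_eq_add, add_comm ω]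
    _ = ∫ z in (-1 : ℝ)..(-ξ), (1 + z)⁻¹ • F (-z) :=
        integral_Ioi_comp_sub_div_one_add (by rwa [← sub_eq_add_neg]) (fun z => F (-z))
    _ = ∫ z in ξ..1, (1 - z)⁻¹ • F z := by
        simpa using intervalIntegral.integral_comp_neg (a := -1) (b := -ξ)
          (fun z => (1 - z)⁻¹ • F z)

theorem integrable_smul_comp_div_one_add_abs {F : ℝ → E} (hF : StronglyMeasurable F) {ξ : ℝ}
    (h : ∫⁻ ω, ‖F ((ξ - ω) / (1 + |ω|))‖ₑ * ENNReal.ofReal (1 + |ω|)⁻¹ < ∞) :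
    Integrable fun ω : ℝ => (1 + |ω|)⁻¹ • F ((ξ - ω) / (1 + |ω|)) := by
  refine ⟨?_, ?_⟩
  · have hden : Continuous fun ω : ℝ => 1 + |ω| := by fun_prop
    have hpos : ∀ ω : ℝ, 1 + |ω| ≠ 0 := fun ω => by positivity
    exact (hden.inv₀ hpos).aestronglyMeasurable.smul
      (hF.comp_measurable ((continuous_const.sub continuous_id).div hden hpos).measurable
        ).aestronglyMeasurable
  · rw [hasFiniteIntegral_iff_enorm]
    simp_rw [enorm_smul, Real.enorm_of_nonneg (inv_nonneg.2 (by positivity : (0 : ℝ) ≤ 1 + |_|)),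
      mul_comm (ENNReal.ofReal _)]
    exact h

theorem affineWeylHeisenberg_symbol_formula_general
    (F : ℝ → ℂ) (hFmeas : Measurable F)
    (hint : ∀ᵐ ξ ∂(volume : Measure ℝ),
      ∫⁻ ω, (‖F ((ξ - ω) / (1 + |ω|))‖₊ : ℝ≥0∞) * ENNReal.ofReal (1 + |ω|)⁻¹ < ⊤) :
    ∀ᵐ ξ ∂(volume : Measure ℝ),
      ∫ ω : ℝ, F ((ξ - ω) / (1 + |ω|)) * (((1 + |ω|)⁻¹ : ℝ) : ℂ)
        = (∫ z in (-1 : ℝ)..ξ, F z / ((1 + z : ℝ) : ℂ))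
          + ∫ z in ξ..(1 : ℝ), F z / ((1 - z : ℝ) : ℂ) := by
  have hne : ∀ᵐ ξ : ℝ, ξ ∉ ({-1, 1} : Set ℝ) :=
    measure_eq_zero_iff_ae_notMem.mp ((toFinite _).measure_zero _)
  filter_upwards [hint, hne] with ξ hξ hξne
  rw [mem_insert_iff, mem_singleton_iff, not_or] at hξne
  have hmul (r : ℝ) (z : ℂ) : z * r = r • z := by rw [Complex.real_smul, mul_comm]
  have hdiv (r : ℝ) (z : ℂ) : z / r = r⁻¹ • z := by
    rw [Complex.real_smul, div_eq_inv_mul, Complex.ofReal_inv]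
  simp only [hmul, hdiv]
  have hG := integrable_smul_comp_div_one_add_abs hFmeas.stronglyMeasurable hξ
  have hIio : ∫ ω in Iio (0 : ℝ), (1 + |ω|)⁻¹ • F ((ξ - ω) / (1 + |ω|))
      = ∫ ω in Iio (0 : ℝ), (1 - ω)⁻¹ • F ((ξ - ω) / (1 - ω)) :=
    setIntegral_congr_fun measurableSet_Iio fun ω hω => by rw [abs_of_neg hω, ← sub_eq_add_neg]
  have hIoi : ∫ ω in Ioi (0 : ℝ), (1 + |ω|)⁻¹ • F ((ξ - ω) / (1 + |ω|))
      = ∫ ω in Ioi (0 : ℝ), (1 + ω)⁻¹ • F ((ξ - ω) / (1 + ω)) :=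
    setIntegral_congr_fun measurableSet_Ioi fun ω hω => by rw [abs_of_pos hω]
  rw [← intervalIntegral.integral_Iic_add_Ioi hG.integrableOn hG.integrableOn,
    integral_Iic_eq_integral_Iio, hIio, hIoi,
    integral_Iio_comp_sub_div_one_sub (fun h => hξne.2 (by linarith)),
    integral_Ioi_comp_sub_div_one_add (fun h => hξne.1 (by linarith)), add_comm]

/-- Change-of-variables computation of the symbol of the affine
Weyl–Heisenberg system with `η(ω) = ω`, `β(ω) = (1+|ω|)⁻¹` and `s = 1`:  for a.e. `ξ`,
`∫_ℝ F((ξ-ω)/(1+|ω|)) (1+|ω|)⁻¹ dω = ∫_{-1}^ξ F(z)/(1+z) dz + ∫_ξ^1 F(z)/(1-z) dz`,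
the one-dimensional integrals on the right being oriented (interval) integrals.
In particular, with `F = conj ψ̂ · φ̂`, the left-hand side is the symbol `m(ξ)` of the
system `M_ω T_x D_{(1+|ω|)⁻¹} ψ`, `M_ω T_x D_{(1+|ω|)⁻¹} φ` with measure `dx dω`. -/
theorem affineWeylHeisenberg_symbol_formula
    (F : ℝ → ℂ) (hFmeas : Measurable F)
    (hF1 : ∫⁻ z in Set.Ioo (-1 : ℝ) 1,
        (‖F z‖₊ : ℝ≥0∞) * ENNReal.ofReal ((1 + z)⁻¹ + (1 - z)⁻¹) < ⊤)
    (hloc1 : LocallyIntegrableOn (fun z => F z / ((1 + z : ℝ) : ℂ)) {(-1 : ℝ)}ᶜ volume)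
    (hloc2 : LocallyIntegrableOn (fun z => F z / ((1 - z : ℝ) : ℂ)) {(1 : ℝ)}ᶜ volume)
    (hint : ∀ᵐ ξ ∂(volume : Measure ℝ),
      ∫⁻ ω, (‖F ((ξ - ω) / (1 + |ω|))‖₊ : ℝ≥0∞) * ENNReal.ofReal (1 + |ω|)⁻¹ < ⊤) :
    ∀ᵐ ξ ∂(volume : Measure ℝ),
      ∫ ω : ℝ, F ((ξ - ω) / (1 + |ω|)) * (((1 + |ω|)⁻¹ : ℝ) : ℂ)
        = (∫ z in (-1 : ℝ)..ξ, F z / ((1 + z : ℝ) : ℂ))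
          + ∫ z in ξ..(1 : ℝ), F z / ((1 - z : ℝ) : ℂ) :=
  affineWeylHeisenberg_symbol_formula_general F hFmeas hint
end

section
/- Let ψ̂(z) := (1−z)·χ_{[−1,1]}(z) and φ̂(z) := (1+z)·χ_{[−1,1]}(z), and define m(ξ) := ∫_{−1}^{ξ} ψ̂(z)φ̂(z)/(1+z) dz + ∫_{ξ}^{1} ψ̂(z)φ̂(z)/(1−z) dz (oriented integrals). Then m(ξ) = 3 − ξ² for |ξ| ≤ 1 and m(ξ) = 2 for |ξ| > 1; in particular 2 ≤ m(ξ) ≤ 3 for all ξ ∈ ℝ. -/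
/-!
Off the null set `{-1, 1}` the two integrands are `(1 - z)·χ_{[-1,1]}` and `(1 + z)·χ_{[-1,1]}`.
Integrating `f·χ_{[a,b]}` from `a` to `ξ` (or from `ξ` to `b`) is integrating `f` up to (or from)
the projection `c = max a (min b ξ)` of `ξ` onto `[a, b]`, so
`m(ξ) = ∫_{-1}^c (1 - z) dz + ∫_c^1 (1 + z) dz = 3 - c²`.
-/

open MeasureTheory Set intervalIntegral

noncomputable section

section IndicatorIcc

variable {E : Type*} [NormedAddCommGroup E] [NormedSpace ℝ E] {f : ℝ → E} {a b : ℝ}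

theorem intervalIntegral_indicator_Icc_left (hab : a ≤ b) (hf : IntegrableOn f (Icc a b))
    (x : ℝ) : ∫ z in a..x, (Icc a b).indicator f z = ∫ z in a..max a (min b x), f z := by
  set c := max a (min b x) with hc_def
  have hc : c ∈ Icc a b := ⟨le_max_left _ _, max_le hab (min_le_left _ _)⟩
  have hg := (hf.integrable_indicator measurableSet_Icc).intervalIntegrable (a := a) (b := c)
  have hg' := (hf.integrable_indicator measurableSet_Icc).intervalIntegrable (a := c) (b := x)
  rw [← integral_add_adjacent_intervals hg hg']
  have h_inside : ∫ z in a..c, (Icc a b).indicator f z = ∫ z in a..c, f z :=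
    integral_congr fun z hz => indicator_of_mem (uIcc_subset_Icc (left_mem_Icc.2 hab) hc hz) f
  have h_outside : ∫ z in c..x, (Icc a b).indicator f z = 0 := by
    -- `Ι c x` meets `[a, b]` at most in the point `a`.
    refine integral_zero_ae ?_
    filter_upwards [volume.ae_ne a] with z hza hz
    refine indicator_of_notMem (fun hzab => ?_) f
    rcases lt_or_ge x a with hxa | hax
    · rw [hc_def, min_eq_right (hxa.le.trans hab), max_eq_left hxa.le, uIoc_of_ge hxa.le] at hz
      exact hza (le_antisymm hz.2 hzab.1)
    rcases le_or_gt x b with hxb | hbx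
    · rw [hc_def, min_eq_right hxb, max_eq_right hax, uIoc_of_le le_rfl, Ioc_self] at hz
      exact hz
    · rw [hc_def, min_eq_left hbx.le, max_eq_right hab, uIoc_of_le hbx.le] at hz
      exact hz.1.not_ge hzab.2
  rw [h_inside, h_outside, add_zero]

theorem intervalIntegral_indicator_Icc_right (hab : a ≤ b) (hf : IntegrableOn f (Icc a b))
    (x : ℝ) : ∫ z in x..b, (Icc a b).indicator f z = ∫ z in max a (min b x)..b, f z := by
  have hg := hf.integrable_indicator measurableSet_Icc
  have hfi (c : ℝ) (hc : c ∈ Icc a b) : IntervalIntegrable f volume a c :=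
    (hf.mono_set (uIcc_subset_Icc (left_mem_Icc.2 hab) hc)).intervalIntegrable
  rw [← integral_interval_sub_left hg.intervalIntegrable hg.intervalIntegrable,
    intervalIntegral_indicator_Icc_left hab hf, intervalIntegral_indicator_Icc_left hab hf,
    min_self, max_eq_right hab, integral_interval_sub_left (hfi b (right_mem_Icc.2 hab))
      (hfi _ ⟨le_max_left _ _, max_le hab (min_le_left _ _)⟩)]

end IndicatorIcc

def windowPsiHat (z : ℝ) : ℂ :=
  ((1 - z : ℝ) : ℂ) * (Icc (-1 : ℝ) 1).indicator (fun _ => (1 : ℂ)) z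

def windowPhiHat (z : ℝ) : ℂ :=
  ((1 + z : ℝ) : ℂ) * (Icc (-1 : ℝ) 1).indicator (fun _ => (1 : ℂ)) z

theorem windowPsiHat_mul_windowPhiHat (z : ℝ) :
    windowPsiHat z * windowPhiHat z =
      (Icc (-1 : ℝ) 1).indicator (fun z => (((1 - z) * (1 + z) : ℝ) : ℂ)) z := by
  by_cases hz : z ∈ Icc (-1 : ℝ) 1 <;> simp [windowPsiHat, windowPhiHat, hz]

theorem windowPsiHat_mul_windowPhiHat_div_one_add :
    (fun z => windowPsiHat z * windowPhiHat z / ((1 + z : ℝ) : ℂ)) =ᵐ[volume]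
      (Icc (-1 : ℝ) 1).indicator (fun z => ((1 - z : ℝ) : ℂ)) := by
  filter_upwards [volume.ae_ne (-1)] with z hz
  have : (1 + z : ℂ) ≠ 0 := by exact_mod_cast fun h => hz (by linarith)
  by_cases hz' : z ∈ Icc (-1 : ℝ) 1 <;>
    simp [windowPsiHat_mul_windowPhiHat, hz', mul_div_assoc, div_self this]

theorem windowPsiHat_mul_windowPhiHat_div_one_sub :
    (fun z => windowPsiHat z * windowPhiHat z / ((1 - z : ℝ) : ℂ)) =ᵐ[volume]
      (Icc (-1 : ℝ) 1).indicator (fun z => ((1 + z : ℝ) : ℂ)) := by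
  filter_upwards [volume.ae_ne 1] with z hz
  have : (1 - z : ℂ) ≠ 0 := by exact_mod_cast fun h => hz (by linarith)
  by_cases hz' : z ∈ Icc (-1 : ℝ) 1 <;>
    simp [windowPsiHat_mul_windowPhiHat, hz', mul_div_right_comm, div_self this]

theorem integral_windowPsiHat_mul_windowPhiHat (ξ : ℝ) :
    (∫ z in (-1 : ℝ)..ξ, windowPsiHat z * windowPhiHat z / ((1 + z : ℝ) : ℂ))
      + ∫ z in ξ..(1 : ℝ), windowPsiHat z * windowPhiHat z / ((1 - z : ℝ) : ℂ)
      = ((3 - max (-1) (min 1 ξ) ^ 2 : ℝ) : ℂ) := by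
  have hint (f : ℝ → ℝ) (hf : Continuous f) : IntegrableOn (fun z => (f z : ℂ)) (Icc (-1) 1) :=
    (Complex.continuous_ofReal.comp hf).integrableOn_Icc
  rw [integral_congr_ae (windowPsiHat_mul_windowPhiHat_div_one_add.mono fun _ h _ => h),
    integral_congr_ae (windowPsiHat_mul_windowPhiHat_div_one_sub.mono fun _ h _ => h),
    intervalIntegral_indicator_Icc_left (by norm_num) (hint _ (by fun_prop)),
    intervalIntegral_indicator_Icc_right (by norm_num) (hint _ (by fun_prop)),
    integral_ofReal, integral_ofReal]
  simp only [intervalIntegral.integral_sub intervalIntegrable_const intervalIntegrable_id,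
    intervalIntegral.integral_add intervalIntegrable_const intervalIntegrable_id,
    intervalIntegral.integral_const, integral_id, smul_eq_mul]
  push_cast
  ring

/-- For the windows with `ψ̂(z) = (1-z)χ_{[-1,1]}(z)` and
`φ̂(z) = (1+z)χ_{[-1,1]}(z)`, the symbol
`m(ξ) = ∫_{-1}^ξ ψ̂(z)φ̂(z)/(1+z) dz + ∫_ξ^1 ψ̂(z)φ̂(z)/(1-z) dz` (oriented integrals)
equals `3 - ξ²` for `|ξ| ≤ 1` and `2` for `|ξ| > 1`; in particular `2 ≤ m(ξ) ≤ 3`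
(and `m` is real valued). -/
theorem affineWeylHeisenberg_symbol_example
    (ψhat φhat : ℝ → ℂ)
    (hψ : ψhat = fun z => ((1 - z : ℝ) : ℂ) * (Set.Icc (-1 : ℝ) 1).indicator (fun _ => (1 : ℂ)) z)
    (hφ : φhat = fun z => ((1 + z : ℝ) : ℂ) * (Set.Icc (-1 : ℝ) 1).indicator (fun _ => (1 : ℂ)) z)
    (m : ℝ → ℂ)
    (hm : ∀ ξ, m ξ = (∫ z in (-1 : ℝ)..ξ, ψhat z * φhat z / ((1 + z : ℝ) : ℂ))
      + ∫ z in ξ..(1 : ℝ), ψhat z * φhat z / ((1 - z : ℝ) : ℂ)) :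
    (∀ ξ : ℝ, |ξ| ≤ 1 → m ξ = ((3 - ξ ^ 2 : ℝ) : ℂ)) ∧
    (∀ ξ : ℝ, 1 < |ξ| → m ξ = 2) ∧
    (∀ ξ : ℝ, (m ξ).im = 0 ∧ 2 ≤ (m ξ).re ∧ (m ξ).re ≤ 3) := by
  subst hψ hφ
  have hsymbol (ξ : ℝ) : m ξ = ((3 - max (-1) (min 1 ξ) ^ 2 : ℝ) : ℂ) :=
    (hm ξ).trans (integral_windowPsiHat_mul_windowPhiHat ξ)
  refine ⟨fun ξ hξ => ?_, fun ξ hξ => ?_, fun ξ => ?_⟩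
  · obtain ⟨hξ₁, hξ₂⟩ := abs_le.1 hξ
    rw [hsymbol, min_eq_right hξ₂, max_eq_right hξ₁]
  · have hclamp : max (-1) (min 1 ξ) ^ 2 = 1 := by
      rcases lt_abs.1 hξ with hξ | hξ
      · rw [min_eq_left hξ.le, max_eq_right (by norm_num)]; norm_num
      · rw [min_eq_right (by linarith), max_eq_left (by linarith)]; norm_num
    rw [hsymbol, hclamp]
    norm_num
  · have hclamp : max (-1) (min 1 ξ) ^ 2 ≤ 1 :=
      (sq_le_one_iff_abs_le_one _).2 <|
        abs_le.2 ⟨le_max_left _ _, max_le (by norm_num) (min_le_left _ _)⟩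
    rw [hsymbol, Complex.ofReal_im, Complex.ofReal_re]
    exact ⟨rfl, by linarith, by linarith [sq_nonneg (max (-1) (min 1 ξ))]⟩
end
end

section
/- There exist no ψ, φ ∈ L²(ℝ) satisfying both ∫_{−1}^{1} |ψ̂(z)φ̂(z)|·(1/(1+z) + 1/(1−z)) dz < ∞ and m(ξ) = 1 for a.e. ξ ∈ ℝ, where m(ξ) := ∫_{−1}^{ξ} conj(ψ̂(z))φ̂(z)/(1+z) dz + ∫_{ξ}^{1} conj(ψ̂(z))φ̂(z)/(1−z) dz (oriented integrals). Consequently, for the affine Weyl–Heisenberg systems with η(ω) = ω, β(ω) = (1+|ω|)^{−1} and s = 1, there is no reproducing pair (Ψ,Φ) satisfying the absolute convergence condition whose resolution operator is the identity. -/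
/-!
Write `F = conj ψ̂ · φ̂`, `g = F / (1 + z)` and `h = F / (1 - z)`. The convergence condition
makes `g` and `h` integrable on `(-1, 1)`, where `m(ξ) = ∫_{-1}^ξ (g - h) + ∫_{-1}^1 h` is
continuous. Being `1` almost everywhere, it is constant on `(-1, 1)`, so by the Lebesgue
differentiation theorem `g = h` almost everywhere on `(-1, 1)`. As `1 + z ≠ 1 - z` for `z ≠ 0`,
this forces `F = 0` there, hence `m = 0` on `(-1, 1)`.
-/

open MeasureTheory Real Set Filter
open scoped ComplexConjugate ENNReal Interval

theorem ae_eq_zero_of_ae_primitive_eq_const {E : Type*} [NormedAddCommGroup E]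
    [NormedSpace ℝ E] [CompleteSpace E] {f : ℝ → E} {a b : ℝ}
    (hf : IntervalIntegrable f volume a b) {C : E}
    (hC : ∀ᵐ x, x ∈ Ioo a b → ∫ t in a..x, f t = C) :
    f =ᵐ[volume.restrict (Ioo a b)] 0 := by
  have hIoo : Ioo a b ⊆ uIcc a b := Ioo_subset_Icc_self.trans Icc_subset_uIcc
  have hconst : EqOn (fun x => ∫ t in a..x, f t) (fun _ => C) (Ioo a b) :=
    Measure.eqOn_open_of_ae_eq ((ae_restrict_iff' measurableSet_Ioo).2 hC) isOpen_Ioo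
      ((intervalIntegral.continuousOn_primitive_interval' hf left_mem_uIcc).mono hIoo)
      continuousOn_const
  rw [EventuallyEq, ae_restrict_iff' measurableSet_Ioo]
  filter_upwards [hf.ae_hasDerivAt_integral] with x hderiv hx
  exact (hderiv (hIoo hx) a left_mem_uIcc).unique <| (hasDerivAt_const x C).congr_of_eventuallyEq
    (hconst.eventuallyEq_of_mem (isOpen_Ioo.mem_nhds hx))

theorem ae_eq_of_ae_integral_add_integral_eq_const {E : Type*} [NormedAddCommGroup E]
    [NormedSpace ℝ E] [CompleteSpace E] {g h : ℝ → E} {a b : ℝ}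
    (hg : IntervalIntegrable g volume a b) (hh : IntervalIntegrable h volume a b) {C : E}
    (hC : ∀ᵐ ξ, ξ ∈ Ioo a b → (∫ t in a..ξ, g t) + ∫ t in ξ..b, h t = C) :
    g =ᵐ[volume.restrict (Ioo a b)] h := by
  have hgh := ae_eq_zero_of_ae_primitive_eq_const (hg.sub hh) (C := C - ∫ t in a..b, h t) <| by
    filter_upwards [hC] with ξ hξ hξI
    have hξ' : ξ ∈ [[a, b]] := Icc_subset_uIcc (Ioo_subset_Icc_self hξI)
    have hleft := uIcc_subset_uIcc_left hξ'
    rw [intervalIntegral.integral_sub (hg.mono_set hleft) (hh.mono_set hleft),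
      ← intervalIntegral.integral_add_adjacent_intervals (hh.mono_set hleft)
        (hh.mono_set (uIcc_subset_uIcc_right hξ'))]
    rw [← hξ hξI]
    abel
  exact hgh.mono fun x hx => sub_eq_zero.1 hx

theorem intervalIntegral_eq_zero_of_ae_eq_zero_on_Ioo {E : Type*} [NormedAddCommGroup E]
    [NormedSpace ℝ E] {f : ℝ → E} {a b c d : ℝ} (hf : f =ᵐ[volume.restrict (Ioo a b)] 0)
    (hc : c ∈ Icc a b) (hd : d ∈ Icc a b) : ∫ x in c..d, f x = 0 := by
  rw [Measure.restrict_congr_set Ioo_ae_eq_Ioc] at hf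
  have hsub : Ι c d ⊆ Ioc a b := Ioc_subset_Ioc (le_min hc.1 hd.1) (max_le hc.2 hd.2)
  rw [intervalIntegral.integral_congr_ae_restrict (ae_restrict_of_ae_restrict_of_subset hsub hf)]
  exact intervalIntegral.integral_zero

theorem integrableOn_of_enorm_le {α E : Type*} [MeasurableSpace α] [NormedAddCommGroup E]
    {μ : Measure α} {f : α → E} {G : α → ℝ≥0∞} {s : Set α} (hs : MeasurableSet s)
    (hf : AEStronglyMeasurable f (μ.restrict s)) (hG : ∫⁻ x in s, G x ∂μ < ∞)
    (hle : ∀ x ∈ s, ‖f x‖ₑ ≤ G x) : IntegrableOn f s μ :=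
  ⟨hf, (setLIntegral_mono' hs hle).trans_lt hG⟩

theorem enorm_conj_mul_div_le {a b : ℂ} {p w : ℝ} (hp : 0 < p) (hpw : p⁻¹ ≤ w) :
    ‖conj a * b / (p : ℂ)‖ₑ ≤ ‖a * b‖₊ * ENNReal.ofReal w := by
  have hnorm : ‖conj a * b / (p : ℂ)‖ = ‖a * b‖ * p⁻¹ := by
    simp [abs_of_pos hp, div_eq_mul_inv]
  rw [← ofReal_norm, hnorm, ENNReal.ofReal_mul (norm_nonneg _), ofReal_norm, enorm_eq_nnnorm]
  gcongr

theorem intervalIntegrable_conj_mul_div_ofReal {ψ φ : ℝ → ℂ} {p W : ℝ → ℝ} {a b : ℝ}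
    (hab : a ≤ b) (hψ : AEMeasurable ψ) (hφ : AEMeasurable φ) (hp : Measurable p)
    (hpW : ∀ z ∈ Ioo a b, 0 < p z ∧ (p z)⁻¹ ≤ W z)
    (hW : ∫⁻ z in Ioo a b, ‖ψ z * φ z‖₊ * ENNReal.ofReal (W z) < ∞) :
    IntervalIntegrable (fun z => conj (ψ z) * φ z / (p z : ℂ)) volume a b :=
  (intervalIntegrable_iff_integrableOn_Ioo_of_le hab).2 <|
    integrableOn_of_enorm_le measurableSet_Ioo
      (AEMeasurable.div (by fun_prop) (by fun_prop)).aestronglyMeasurable.restrict hW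
      fun z hz => enorm_conj_mul_div_le (hpW z hz).1 (hpW z hz).2

theorem eq_zero_of_div_eq_div_of_ne {K : Type*} [DivisionRing K] {u p q : K} (hpq : p ≠ q)
    (h : u / p = u / q) : u = 0 := by
  by_contra hu
  rw [div_eq_mul_inv, div_eq_mul_inv] at h
  exact hpq (inv_injective (mul_left_cancel₀ hu h))

/-- For the affine Weyl–Heisenberg systems with `η(ω) = ω`,
`β(ω) = (1+|ω|)⁻¹` and `s = 1`, there is no reproducing pair satisfying the absolute
convergence condition whose resolution operator is the identity: there are no
`ψ̂, φ̂ ∈ L²(ℝ)` with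
`∫_{-1}^1 |ψ̂(z)φ̂(z)| (1/(1+z) + 1/(1-z)) dz < ∞` and
`m(ξ) = ∫_{-1}^ξ conj(ψ̂(z))φ̂(z)/(1+z) dz + ∫_ξ^1 conj(ψ̂(z))φ̂(z)/(1-z) dz = 1`
for a.e. `ξ ∈ ℝ` (oriented integrals). -/
theorem no_identity_resolution_affineWeylHeisenberg :
    ¬ ∃ ψhat φhat : ℝ → ℂ,
      MemLp ψhat 2 (volume : Measure ℝ) ∧ MemLp φhat 2 (volume : Measure ℝ) ∧
      (∫⁻ z in Set.Ioo (-1 : ℝ) 1,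
          (‖ψhat z * φhat z‖₊ : ℝ≥0∞) * ENNReal.ofReal ((1 + z)⁻¹ + (1 - z)⁻¹) < ⊤) ∧
      (∀ᵐ ξ ∂(volume : Measure ℝ),
        (∫ z in (-1 : ℝ)..ξ, conj (ψhat z) * φhat z / ((1 + z : ℝ) : ℂ))
          + (∫ z in ξ..(1 : ℝ), conj (ψhat z) * φhat z / ((1 - z : ℝ) : ℂ)) = 1) := by
  rintro ⟨ψ, φ, hψ, hφ, hconv, hm⟩
  set g : ℝ → ℂ := fun z => conj (ψ z) * φ z / ((1 + z : ℝ) : ℂ)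
  set h : ℝ → ℂ := fun z => conj (ψ z) * φ z / ((1 - z : ℝ) : ℂ)
  have hpos (z : ℝ) (hz : z ∈ Ioo (-1 : ℝ) 1) : 0 < 1 + z ∧ 0 < 1 - z :=
    ⟨by linarith [hz.1], by linarith [hz.2]⟩
  have hg : IntervalIntegrable g volume (-1) 1 :=
    intervalIntegrable_conj_mul_div_ofReal (by norm_num) hψ.1.aemeasurable hφ.1.aemeasurable
      (by fun_prop) (fun z hz => ⟨(hpos z hz).1,
        le_add_of_nonneg_right (inv_pos.2 (hpos z hz).2).le⟩) hconv
  have hh : IntervalIntegrable h volume (-1) 1 :=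
    intervalIntegrable_conj_mul_div_ofReal (by norm_num) hψ.1.aemeasurable hφ.1.aemeasurable
      (by fun_prop) (fun z hz => ⟨(hpos z hz).2,
        le_add_of_nonneg_left (inv_pos.2 (hpos z hz).1).le⟩) hconv
  have hF : (fun z => conj (ψ z) * φ z) =ᵐ[volume.restrict (Ioo (-1) 1)] 0 := by
    filter_upwards [ae_eq_of_ae_integral_add_integral_eq_const hg hh (hm.mono fun _ hξ _ => hξ),
      Measure.ae_ne _ 0] with z hgh hz0
    exact eq_zero_of_div_eq_div_of_ne
      (Complex.ofReal_injective.ne fun h1 => hz0 (by linarith)) hgh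
  obtain ⟨ξ, hξI, hξ⟩ := Measure.exists_mem_of_measure_ne_zero_of_ae
    (by simp : volume (Ioo (-1 : ℝ) 1) ≠ 0) (ae_restrict_of_ae hm)
  rw [intervalIntegral_eq_zero_of_ae_eq_zero_on_Ioo (hF.mono fun z hz => by simp [hz])
      (left_mem_Icc.2 (by norm_num)) (Ioo_subset_Icc_self hξI),
    intervalIntegral_eq_zero_of_ae_eq_zero_on_Ioo (hF.mono fun z hz => by simp [hz])
      (Ioo_subset_Icc_self hξI) (right_mem_Icc.2 (by norm_num))] at hξ
  norm_num at hξ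
end

section
/- Let ψ̂(z) := (1+z)·χ_{[−1,1]}(z) and β(ω) := (1+|ω|)^{−1}. For every measurable F: ℝ → ℂ with |F(ξ)| ≥ 1 for a.e. ξ ∈ [−1,1], the integral ∫_ℝ ∫_ℝ |F(ξ)|²·|ψ̂(β(ω)(ξ−ω))|²·β(ω) dξ dω diverges (equals +∞). Consequently, for f ∈ L²(ℝ) with |f̂| ≥ 1 a.e. on [−1,1], the analysis coefficients of f with respect to the affine Weyl–Heisenberg system Ψ(x,ω) = M_ω T_x D_{β(ω)}ψ are not square integrable, so Ψ is not a Bessel mapping even though it is part of a reproducing pair. -/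
open MeasureTheory Real
open scoped ENNReal

/-!
For `ω ≤ -1` and `ξ ∈ [-1, 1]` the window argument `(ξ - ω) / (1 + |ω|)` lies in `[0, 1]`,
where `|ψ̂| ≥ 1`; together with `|F| ≥ 1` there, the inner integral is at least `β(ω)`.
Since `β(ω) = (1 + |ω|)⁻¹` decays only like `1 / |ω|`, its integral over `ω ≤ -1` diverges.
-/

noncomputable def hatWindow (z : ℝ) : ℂ :=
  ((1 + z : ℝ) : ℂ) * (Set.Icc (-1 : ℝ) 1).indicator (fun _ => (1 : ℂ)) z

lemma one_le_norm_hatWindow {z : ℝ} (hz : z ∈ Set.Icc (0 : ℝ) 1) : 1 ≤ ‖hatWindow z‖ := by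
  have hz' : z ∈ Set.Icc (-1 : ℝ) 1 := ⟨by linarith [hz.1], hz.2⟩
  rw [hatWindow, Set.indicator_of_mem hz', mul_one, Complex.norm_real, Real.norm_eq_abs,
    abs_of_nonneg (by linarith [hz.1])]
  linarith [hz.1]

lemma sub_div_one_add_abs_mem_Icc {ξ ω : ℝ} (hξ : ξ ∈ Set.Icc (-1 : ℝ) 1) (hω : ω ≤ -1) :
    (ξ - ω) / (1 + |ω|) ∈ Set.Icc (0 : ℝ) 1 := by
  rw [abs_of_nonpos (by linarith)]
  have hpos : 0 < 1 + -ω := by linarith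
  exact ⟨div_nonneg (by linarith [hξ.1]) hpos.le, (div_le_one hpos).2 (by linarith [hξ.2])⟩

lemma not_integrableOn_Ici_inv_one_add_abs (a : ℝ) :
    ¬ IntegrableOn (fun x : ℝ => (1 + |x|)⁻¹) (Set.Ici a) := by
  intro h
  apply not_integrableOn_Ici_inv (a := max a 1)
  refine ((h.mono_set (Set.Ici_subset_Ici.2 (le_max_left a 1))).const_mul 2).mono'
    measurable_inv.aestronglyMeasurable ?_
  filter_upwards [ae_restrict_mem measurableSet_Ici] with x hx
  have hx1 : 1 ≤ x := le_trans (le_max_right a 1) hx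
  rw [norm_inv, Real.norm_eq_abs, abs_of_pos (by linarith), ← div_eq_mul_inv,
    inv_eq_one_div, div_le_div_iff₀ (by linarith) (by linarith)]
  linarith

lemma lintegral_Iic_ofReal_inv_one_add_abs (a : ℝ) :
    ∫⁻ ω in Set.Iic a, ENNReal.ofReal (1 + |ω|)⁻¹ = ⊤ := by
  rw [← (Measure.measurePreserving_neg volume).setLIntegral_comp_preimage_emb
    (Homeomorph.neg ℝ).measurableEmbedding]
  simp only [abs_neg, Set.neg_preimage, Set.neg_Iic]
  by_contra h
  refine not_integrableOn_Ici_inv_one_add_abs (-a) ?_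
  exact (lintegral_ofReal_ne_top_iff_integrable (by fun_prop)
    (Filter.Eventually.of_forall fun x => by positivity)).1 h

lemma ofReal_le_lintegral_hatWindow {F : ℝ → ℂ}
    (hF1 : ∀ᵐ ξ ∂(volume : Measure ℝ).restrict (Set.Icc (-1 : ℝ) 1), 1 ≤ ‖F ξ‖)
    {ω : ℝ} (hω : ω ≤ -1) :
    ENNReal.ofReal (1 + |ω|)⁻¹ ≤ ∫⁻ ξ : ℝ,
      (‖F ξ‖₊ : ℝ≥0∞) ^ 2 * (‖hatWindow ((ξ - ω) / (1 + |ω|))‖₊ : ℝ≥0∞) ^ 2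
        * ENNReal.ofReal (1 + |ω|)⁻¹ := by
  have one_le_sq : ∀ {x : ℂ}, 1 ≤ ‖x‖ → (1 : ℝ≥0∞) ≤ (‖x‖₊ : ℝ≥0∞) ^ 2 := fun hx =>
    one_le_pow₀ (by exact_mod_cast hx)
  calc ENNReal.ofReal (1 + |ω|)⁻¹
      ≤ ∫⁻ _ in Set.Icc (-1 : ℝ) 1, ENNReal.ofReal (1 + |ω|)⁻¹ := by
        rw [setLIntegral_const, Real.volume_Icc]
        exact le_mul_of_one_le_right' (by norm_num)
    _ ≤ ∫⁻ ξ in Set.Icc (-1 : ℝ) 1,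
        (‖F ξ‖₊ : ℝ≥0∞) ^ 2 * (‖hatWindow ((ξ - ω) / (1 + |ω|))‖₊ : ℝ≥0∞) ^ 2
          * ENNReal.ofReal (1 + |ω|)⁻¹ := by
        refine lintegral_mono_ae ?_
        filter_upwards [hF1, ae_restrict_mem measurableSet_Icc] with ξ hFξ hξ
        refine le_mul_of_one_le_left' (one_le_mul (one_le_sq hFξ) (one_le_sq ?_))
        exact one_le_norm_hatWindow (sub_div_one_add_abs_mem_Icc hξ hω)
    _ ≤ _ := setLIntegral_le_lintegral _ _

theorem affineWeylHeisenberg_not_bessel_general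
    (ψhat : ℝ → ℂ)
    (hψ : ψhat = fun z => ((1 + z : ℝ) : ℂ) * (Set.Icc (-1 : ℝ) 1).indicator (fun _ => (1 : ℂ)) z)
    (F : ℝ → ℂ)
    (hF1 : ∀ᵐ ξ ∂(volume : Measure ℝ).restrict (Set.Icc (-1 : ℝ) 1),
      1 ≤ ‖F ξ‖) :
    ∫⁻ ω : ℝ, (∫⁻ ξ : ℝ,
        (‖F ξ‖₊ : ℝ≥0∞) ^ 2 * (‖ψhat ((ξ - ω) / (1 + |ω|))‖₊ : ℝ≥0∞) ^ 2
          * ENNReal.ofReal (1 + |ω|)⁻¹) = ⊤ := by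
  obtain rfl : ψhat = hatWindow := hψ
  rw [eq_top_iff, ← lintegral_Iic_ofReal_inv_one_add_abs (-1)]
  calc ∫⁻ ω in Set.Iic (-1 : ℝ), ENNReal.ofReal (1 + |ω|)⁻¹
      ≤ ∫⁻ ω in Set.Iic (-1 : ℝ), ∫⁻ ξ : ℝ,
        (‖F ξ‖₊ : ℝ≥0∞) ^ 2 * (‖hatWindow ((ξ - ω) / (1 + |ω|))‖₊ : ℝ≥0∞) ^ 2
          * ENNReal.ofReal (1 + |ω|)⁻¹ := by
        refine lintegral_mono_ae ?_
        filter_upwards [ae_restrict_mem measurableSet_Iic] with ω hω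
        exact ofReal_le_lintegral_hatWindow hF1 hω
    _ ≤ _ := setLIntegral_le_lintegral _ _

/-- For the window `ψ̂(z) = (1+z)χ_{[-1,1]}(z)` and
`β(ω) = (1+|ω|)⁻¹`, and any measurable `F` with `|F| ≥ 1` a.e. on `[-1,1]`, the
integral `∫∫ |F(ξ)|² |ψ̂(β(ω)(ξ-ω))|² β(ω) dξ dω` diverges.  Consequently (taking
`F = f̂`), the analysis coefficients of such `f ∈ L²(ℝ)` with respect to the affine
Weyl–Heisenberg system `Ψ(x,ω) = M_ω T_x D_{β(ω)} ψ` are not square-integrable, so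
`Ψ` is not Bessel even though it is part of a reproducing pair. -/
theorem affineWeylHeisenberg_not_bessel
    (ψhat : ℝ → ℂ)
    (hψ : ψhat = fun z => ((1 + z : ℝ) : ℂ) * (Set.Icc (-1 : ℝ) 1).indicator (fun _ => (1 : ℂ)) z)
    (F : ℝ → ℂ) (hFmeas : Measurable F)
    (hF1 : ∀ᵐ ξ ∂(volume : Measure ℝ).restrict (Set.Icc (-1 : ℝ) 1),
      1 ≤ ‖F ξ‖) :
    ∫⁻ ω : ℝ, (∫⁻ ξ : ℝ,
        (‖F ξ‖₊ : ℝ≥0∞) ^ 2 * (‖ψhat ((ξ - ω) / (1 + |ω|))‖₊ : ℝ≥0∞) ^ 2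
          * ENNReal.ofReal (1 + |ω|)⁻¹) = ⊤ :=
  affineWeylHeisenberg_not_bessel_general ψhat hψ F hF1
end
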